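/- Let (H,α) be a monoidal Hom-bialgebra. The map ρ:H⊗(H^op⊗H)→H, g·(h⊗k)=(hα^{-1}(g))φ(α(k)), where φ:H→H is a monoidal Hom-bialgebra automorphism, makes (H,α) a right Hom-module coalgebra over (H^op⊗H,α⊗α): the action is Hom-associative, Hom-unital, and satisfies (g·(h⊗k))_1⊗(g·(h⊗k))_2=g_1·(h_1⊗k_1)⊗g_2·(h_2⊗k_2) and ε(g·(h⊗k))=ε(g)ε(h)ε(k). -/
import Mathlib


open TensorProduct

namespace HomPaper

variable {k : Type*} [CommRing k]
variable {A C V : Type*}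
variable [AddCommGroup A] [Module k A] [AddCommGroup C] [Module k C]
variable [AddCommGroup V] [Module k V]

/-- Monoidal Hom-algebra axioms. -/
def IsHomAlgebra (α : A ≃ₗ[k] A) (mul : A →ₗ[k] A →ₗ[k] A) (one : A) : Prop :=
  (∀ a b c, mul (α a) (mul b c) = mul (mul a b) (α c)) ∧
  (∀ a, mul a one = α a) ∧ (∀ a, mul one a = α a) ∧
  (∀ a b, α (mul a b) = mul (α a) (α b)) ∧ α one = one

/-- Monoidal Hom-coalgebra axioms. -/
def IsHomCoalgebra (γ : C ≃ₗ[k] C) (Δ : C →ₗ[k] C ⊗[k] C) (ε : C →ₗ[k] k) : Prop :=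
  (∀ c, TensorProduct.map γ.symm.toLinearMap Δ (Δ c)
      = TensorProduct.assoc k C C C (TensorProduct.map Δ γ.symm.toLinearMap (Δ c))) ∧
  (∀ c, TensorProduct.lid k C (TensorProduct.map ε LinearMap.id (Δ c)) = γ.symm c) ∧
  (∀ c, TensorProduct.rid k C (TensorProduct.map LinearMap.id ε (Δ c)) = γ.symm c) ∧
  (∀ c, Δ (γ c) = TensorProduct.map γ.toLinearMap γ.toLinearMap (Δ c)) ∧
  (∀ c, ε (γ c) = ε c)

/-- Hom-entwining structure axioms for ψ : C ⊗ A → A ⊗ C, ψ(c⊗a) = a_κ ⊗ c^κ. -/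
def IsHomEntwining (α : A ≃ₗ[k] A) (γ : C ≃ₗ[k] C) (mul : A →ₗ[k] A →ₗ[k] A) (one : A)
    (Δ : C →ₗ[k] C ⊗[k] C) (ε : C →ₗ[k] k) (ψ : C ⊗[k] A →ₗ[k] A ⊗[k] C) : Prop :=
  -- (aa')_κ ⊗ γ(c)^κ = a_κ a'_λ ⊗ γ(c^{κλ})
  (∀ c a a', ψ (γ c ⊗ₜ mul a a')
      = TensorProduct.map (TensorProduct.lift mul) γ.toLinearMap
          ((TensorProduct.assoc k A A C).symm
            (TensorProduct.map LinearMap.id ψ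
              (TensorProduct.assoc k A C A (ψ (c ⊗ₜ a) ⊗ₜ a'))))) ∧
  -- α⁻¹(a_κ) ⊗ c^κ₁ ⊗ c^κ₂ = α⁻¹(a)_{κλ} ⊗ c₁^λ ⊗ c₂^κ
  (∀ c a, TensorProduct.map α.symm.toLinearMap Δ (ψ (c ⊗ₜ a))
      = TensorProduct.assoc k A C C
          (TensorProduct.map ψ LinearMap.id
            ((TensorProduct.assoc k C A C).symm
              (TensorProduct.map LinearMap.id ψ
                (TensorProduct.assoc k C C A (Δ c ⊗ₜ α.symm a)))))) ∧
  -- 1_κ ⊗ c^κ = 1 ⊗ c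
  (∀ c, ψ (c ⊗ₜ one) = one ⊗ₜ c) ∧
  -- a_κ ε(c^κ) = a ε(c)
  (∀ c a, TensorProduct.rid k A (TensorProduct.map LinearMap.id ε (ψ (c ⊗ₜ a))) = ε c • a) ∧
  -- ψ is a morphism in the Hom-category
  (∀ c a, ψ (γ c ⊗ₜ α a) = TensorProduct.map α.toLinearMap γ.toLinearMap (ψ (c ⊗ₜ a)))

/-- The relations defining `V ⊗_A V` (on top of base relations `R₀` defining the coring
module as a quotient of `V`). -/
def corRel (R₀ : Submodule k V) (χ : V ≃ₗ[k] V)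
    (lact : A →ₗ[k] V →ₗ[k] V) (ract : V →ₗ[k] A →ₗ[k] V) : Submodule k (V ⊗[k] V) :=
  Submodule.span k
    ({x | ∃ v a w, x = ract v a ⊗ₜ w - χ v ⊗ₜ lact a (χ.symm w)} ∪
     {x | ∃ r w, r ∈ R₀ ∧ (x = r ⊗ₜ w ∨ x = w ⊗ₜ r)})

/-- Induced left A-action on `V ⊗_A V` (on representatives). -/
noncomputable def lact2 (α : A ≃ₗ[k] A) (χ : V ≃ₗ[k] V) (lact : A →ₗ[k] V →ₗ[k] V) (a : A) :
    V ⊗[k] V →ₗ[k] V ⊗[k] V :=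
  TensorProduct.map (lact (α.symm a)) χ.toLinearMap

/-- Induced right A-action on `V ⊗_A V` (on representatives). -/
noncomputable def ract2 (α : A ≃ₗ[k] A) (χ : V ≃ₗ[k] V) (ract : V →ₗ[k] A →ₗ[k] V) (a : A) :
    V ⊗[k] V →ₗ[k] V ⊗[k] V :=
  TensorProduct.map χ.toLinearMap (ract.flip (α.symm a))

/-- The relations defining `V ⊗_A (V ⊗_A V)`. -/
def corRel3 (R₀ : Submodule k V) (α : A ≃ₗ[k] A) (χ : V ≃ₗ[k] V)
    (lact : A →ₗ[k] V →ₗ[k] V) (ract : V →ₗ[k] A →ₗ[k] V) :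
    Submodule k (V ⊗[k] (V ⊗[k] V)) :=
  Submodule.span k
    ({x | ∃ v a w, x = ract v a ⊗ₜ w - χ v ⊗ₜ lact2 α χ lact a w} ∪
     {x | ∃ v w, w ∈ corRel R₀ χ lact ract ∧ x = v ⊗ₜ w} ∪
     {x | ∃ r w, r ∈ R₀ ∧ x = r ⊗ₜ w})

/-- `(V,χ)` (modulo the relations `R₀`) together with the A-bimodule structure
`lact`, `ract`, comultiplication representative `Δ` and counit `ε` is an
`(A,α)`-Hom-coring: all axioms are stated on representatives, under the quotient
projections by `R₀` resp. the tensor-relation submodules. -/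
def IsHomCoring (α : A ≃ₗ[k] A) (mul : A →ₗ[k] A →ₗ[k] A) (one : A)
    (χ : V ≃ₗ[k] V) (lact : A →ₗ[k] V →ₗ[k] V) (ract : V →ₗ[k] A →ₗ[k] V)
    (R₀ : Submodule k V) (Δ : V →ₗ[k] V ⊗[k] V) (ε : V →ₗ[k] A) : Prop :=
  -- (V,χ) is an (A,α)-Hom-bimodule
  (∀ a b v, Submodule.Quotient.mk (p := R₀) (lact (mul a b) (χ v))
      = Submodule.Quotient.mk (p := R₀) (lact (α a) (lact b v))) ∧
  (∀ v, Submodule.Quotient.mk (p := R₀) (lact one v) = Submodule.Quotient.mk (p := R₀) (χ v)) ∧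
  (∀ v a b, Submodule.Quotient.mk (p := R₀) (ract (χ v) (mul a b))
      = Submodule.Quotient.mk (p := R₀) (ract (ract v a) (α b))) ∧
  (∀ v, Submodule.Quotient.mk (p := R₀) (ract v one) = Submodule.Quotient.mk (p := R₀) (χ v)) ∧
  (∀ a v b, Submodule.Quotient.mk (p := R₀) (ract (lact a v) (α b))
      = Submodule.Quotient.mk (p := R₀) (lact (α a) (ract v b))) ∧
  (∀ a v, Submodule.Quotient.mk (p := R₀) (χ (lact a v))
      = Submodule.Quotient.mk (p := R₀) (lact (α a) (χ v))) ∧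
  (∀ v a, Submodule.Quotient.mk (p := R₀) (χ (ract v a))
      = Submodule.Quotient.mk (p := R₀) (ract (χ v) (α a))) ∧
  (∀ r ∈ R₀, χ r ∈ R₀) ∧
  -- Δ and ε are well defined on the quotient by R₀
  (∀ r ∈ R₀, Submodule.Quotient.mk (p := corRel R₀ χ lact ract) (Δ r) = 0) ∧
  (∀ r ∈ R₀, ε r = 0) ∧
  -- A-bilinearity of Δ
  (∀ a v, Submodule.Quotient.mk (p := corRel R₀ χ lact ract) (Δ (lact a v))
      = Submodule.Quotient.mk (p := corRel R₀ χ lact ract) (lact2 α χ lact a (Δ v))) ∧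
  (∀ v a, Submodule.Quotient.mk (p := corRel R₀ χ lact ract) (Δ (ract v a))
      = Submodule.Quotient.mk (p := corRel R₀ χ lact ract) (ract2 α χ ract a (Δ v))) ∧
  -- A-bilinearity of ε
  (∀ a v, ε (lact a v) = mul a (ε v)) ∧
  (∀ v a, ε (ract v a) = mul (ε v) a) ∧
  -- Hom-coassociativity: χ⁻¹(c₁) ⊗ Δ(c₂) = c₁₁ ⊗ (c₁₂ ⊗ χ⁻¹(c₂))
  (∀ v, Submodule.Quotient.mk (p := corRel3 R₀ α χ lact ract)
        (TensorProduct.map χ.symm.toLinearMap Δ (Δ v))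
      = Submodule.Quotient.mk (p := corRel3 R₀ α χ lact ract)
        (TensorProduct.assoc k V V V (TensorProduct.map Δ χ.symm.toLinearMap (Δ v)))) ∧
  -- counity: ε(c₁)c₂ = c = c₁ε(c₂)
  (∀ v, Submodule.Quotient.mk (p := R₀) (TensorProduct.lift (lact ∘ₗ ε) (Δ v))
      = Submodule.Quotient.mk (p := R₀) v) ∧
  (∀ v, Submodule.Quotient.mk (p := R₀) (TensorProduct.lift (ract.compl₂ ε) (Δ v))
      = Submodule.Quotient.mk (p := R₀) v) ∧
  -- compatibility with the twisting maps
  (∀ v, Submodule.Quotient.mk (p := corRel R₀ χ lact ract) (Δ (χ v))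
      = Submodule.Quotient.mk (p := corRel R₀ χ lact ract)
        (TensorProduct.map χ.toLinearMap χ.toLinearMap (Δ v))) ∧
  (∀ v, ε (χ v) = α (ε v))

end HomPaper

namespace HomPaper

variable {k A B C M : Type*} [CommRing k]
variable [AddCommGroup A] [Module k A] [AddCommGroup B] [Module k B]
variable [AddCommGroup C] [Module k C] [AddCommGroup M] [Module k M]

/-- Monoidal Hom-bialgebra axioms. -/
def IsHomBialgebra (β : B ≃ₗ[k] B) (mul : B →ₗ[k] B →ₗ[k] B) (one : B)
    (Δ : B →ₗ[k] B ⊗[k] B) (ε : B →ₗ[k] k) : Prop :=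
  IsHomAlgebra β mul one ∧ IsHomCoalgebra β Δ ε ∧
  (∀ b b', Δ (mul b b')
      = (TensorProduct.map (TensorProduct.lift mul) (TensorProduct.lift mul))
          (TensorProduct.tensorTensorTensorComm k B B B B (Δ b ⊗ₜ Δ b'))) ∧
  Δ one = one ⊗ₜ one ∧
  (∀ b b', ε (mul b b') = ε b * ε b') ∧ ε one = 1

/-- `(A,α)` is a right `(B,β)`-Hom-comodule algebra with coaction `ρ`. -/
def IsHomComoduleAlgebra (β : B ≃ₗ[k] B) (mulB : B →ₗ[k] B →ₗ[k] B)
    (ΔB : B →ₗ[k] B ⊗[k] B) (εB : B →ₗ[k] k)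
    (α : A ≃ₗ[k] A) (mulA : A →ₗ[k] A →ₗ[k] A) (oneA : A) (oneB : B)
    (ρ : A →ₗ[k] A ⊗[k] B) : Prop :=
  -- Hom-comodule axioms
  (∀ a, TensorProduct.map α.symm.toLinearMap ΔB (ρ a)
      = TensorProduct.assoc k A B B (TensorProduct.map ρ β.symm.toLinearMap (ρ a))) ∧
  (∀ a, TensorProduct.rid k A (TensorProduct.map LinearMap.id εB (ρ a)) = α.symm a) ∧
  (∀ a, ρ (α a) = TensorProduct.map α.toLinearMap β.toLinearMap (ρ a)) ∧
  -- ρ is a morphism of Hom-algebras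
  (∀ a a', ρ (mulA a a')
      = (TensorProduct.map (TensorProduct.lift mulA) (TensorProduct.lift mulB))
          (TensorProduct.tensorTensorTensorComm k A B A B (ρ a ⊗ₜ ρ a'))) ∧
  ρ oneA = oneA ⊗ₜ oneB

/-- `(C,γ)` is a right `(B,β)`-Hom-module coalgebra with action `act`. -/
def IsHomModuleCoalgebra (β : B ≃ₗ[k] B) (mulB : B →ₗ[k] B →ₗ[k] B) (oneB : B)
    (ΔB : B →ₗ[k] B ⊗[k] B) (εB : B →ₗ[k] k)
    (γ : C ≃ₗ[k] C) (ΔC : C →ₗ[k] C ⊗[k] C) (εC : C →ₗ[k] k)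
    (act : C →ₗ[k] B →ₗ[k] C) : Prop :=
  -- Hom-module axioms
  (∀ c b b', act (γ c) (mulB b b') = act (act c b) (β b')) ∧
  (∀ c, act c oneB = γ c) ∧
  (∀ c b, γ (act c b) = act (γ c) (β b)) ∧
  -- the action is a morphism of Hom-coalgebras
  (∀ c b, ΔC (act c b)
      = (TensorProduct.map (TensorProduct.lift act) (TensorProduct.lift act))
          (TensorProduct.tensorTensorTensorComm k C C B B (ΔC c ⊗ₜ ΔB b))) ∧
  (∀ c b, εC (act c b) = εC c * εB b)

/-- The entwining map of a Hom-Doi-Koppinen datum: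
`ψ(c⊗a) = α(a₍₀₎) ⊗ γ⁻¹(c)·a₍₁₎`. -/
noncomputable def dkEntwining (α : A ≃ₗ[k] A) (γ : C ≃ₗ[k] C)
    (ρA : A →ₗ[k] A ⊗[k] B) (actC : C →ₗ[k] B →ₗ[k] C) :
    C ⊗[k] A →ₗ[k] A ⊗[k] C :=
  (TensorProduct.map α.toLinearMap
      ((TensorProduct.lift actC) ∘ₗ (TensorProduct.map γ.symm.toLinearMap LinearMap.id))) ∘ₗ
    (TensorProduct.leftComm k C A B).toLinearMap ∘ₗ
      (TensorProduct.map LinearMap.id ρA)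
end HomPaper
namespace HomPaper

/-- Monoidal Hom-Hopf algebra axioms: a monoidal Hom-bialgebra with an antipode. -/
def IsHomHopfAlgebra {k H : Type*} [CommRing k] [AddCommGroup H] [Module k H]
    (α : H ≃ₗ[k] H) (mul : H →ₗ[k] H →ₗ[k] H) (one : H)
    (Δ : H →ₗ[k] H ⊗[k] H) (ε : H →ₗ[k] k) (S : H →ₗ[k] H) : Prop :=
  IsHomBialgebra α mul one Δ ε ∧
  (∀ h, S (α h) = α (S h)) ∧
  (∀ h, TensorProduct.lift mul (TensorProduct.map S LinearMap.id (Δ h)) = ε h • one) ∧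
  (∀ h, TensorProduct.lift mul (TensorProduct.map LinearMap.id S (Δ h)) = ε h • one)

section OpTensor

variable {k H : Type*} [CommRing k] [AddCommGroup H] [Module k H]

/-- The multiplication of `H^op ⊗ H`: `(h⊗k)(h'⊗k') = h'h ⊗ kk'`. -/
noncomputable def opTensorMul (mul : H →ₗ[k] H →ₗ[k] H) :
    (H ⊗[k] H) →ₗ[k] (H ⊗[k] H) →ₗ[k] H ⊗[k] H :=
  TensorProduct.curry
    ((TensorProduct.map (TensorProduct.lift mul.flip) (TensorProduct.lift mul)) ∘ₗ
      (TensorProduct.tensorTensorTensorComm k H H H H).toLinearMap)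

/-- The comultiplication of `H^op ⊗ H`: `(h⊗k) ↦ (h₁⊗k₁) ⊗ (h₂⊗k₂)`. -/
noncomputable def opTensorComul (Δ : H →ₗ[k] H ⊗[k] H) :
    (H ⊗[k] H) →ₗ[k] (H ⊗[k] H) ⊗[k] (H ⊗[k] H) :=
  (TensorProduct.tensorTensorTensorComm k H H H H).toLinearMap ∘ₗ
    TensorProduct.map Δ Δ

/-- The counit of `H^op ⊗ H`: `(h⊗k) ↦ ε(h)ε(k)`. -/
noncomputable def opTensorCounit (ε : H →ₗ[k] k) : (H ⊗[k] H) →ₗ[k] k :=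
  (TensorProduct.lid k k).toLinearMap ∘ₗ TensorProduct.map ε ε

end OpTensor

/-- The right action of `H^op ⊗ H` on `H`: `g·(h⊗k) = (h·α⁻¹(g))·φ(α(k))`. -/
noncomputable def opTensorAct {k H : Type*} [CommRing k] [AddCommGroup H] [Module k H]
    (α : H ≃ₗ[k] H) (mul : H →ₗ[k] H →ₗ[k] H) (φ : H ≃ₗ[k] H) :
    H →ₗ[k] (H ⊗[k] H) →ₗ[k] H :=
  TensorProduct.curry
    ((TensorProduct.lift mul) ∘ₗ
      (TensorProduct.map (TensorProduct.lift (mul.compl₂ α.symm.toLinearMap))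
        (φ.toLinearMap ∘ₗ α.toLinearMap)) ∘ₗ
      (TensorProduct.assoc k H H H).symm.toLinearMap ∘ₗ
      (TensorProduct.leftComm k H H H).toLinearMap)

/-- Let `(H,α)` be a monoidal Hom-bialgebra and `φ` a monoidal
Hom-bialgebra automorphism of `H`. The map `g·(h⊗k) = (h·α⁻¹(g))·φ(α(k))` makes
`(H,α)` a right Hom-module coalgebra over `(H^op⊗H, α⊗α)`: the action is
Hom-associative, Hom-unital, comultiplicative and counital. -/
theorem bialgebra_module_coalgebra_over_opTensor
    {k H : Type*} [CommRing k] [AddCommGroup H] [Module k H]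
    (α : H ≃ₗ[k] H) (mul : H →ₗ[k] H →ₗ[k] H) (one : H)
    (Δ : H →ₗ[k] H ⊗[k] H) (ε : H →ₗ[k] k)
    (hH : IsHomBialgebra α mul one Δ ε)
    (φ : H ≃ₗ[k] H)
    (hφmul : ∀ g h, φ (mul g h) = mul (φ g) (φ h))
    (hφone : φ one = one)
    (hφΔ : ∀ h, Δ (φ h) = TensorProduct.map φ.toLinearMap φ.toLinearMap (Δ h))
    (hφε : ∀ h, ε (φ h) = ε h)
    (hφα : ∀ h, φ (α h) = α (φ h)) :
    IsHomModuleCoalgebra (B := H ⊗[k] H)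
      (TensorProduct.congr α α) (opTensorMul mul) (one ⊗ₜ one)
      (opTensorComul Δ) (opTensorCounit ε)
      α Δ ε (opTensorAct α mul φ) := by
  obtain ⟨⟨hassoc, honer, honel, hαmul, hαone⟩, ⟨hco1, hco2, hco3, hΔα, hεα⟩,
    hΔmul, hΔone, hεmul, hεone⟩ := hH
  have hact : ∀ g h k', opTensorAct α mul φ g (h ⊗ₜ[k] k')
      = mul (mul h (α.symm g)) (φ (α k')) := fun g h k' => by simp [opTensorAct]
  have hαinvmul : ∀ a b, α.symm (mul a b) = mul (α.symm a) (α.symm b) := by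
    intro a b
    apply α.injective
    rw [α.apply_symm_apply, hαmul, α.apply_symm_apply, α.apply_symm_apply]
  have hφαinv : ∀ x, φ (α.symm x) = α.symm (φ x) := by
    intro x
    apply α.injective
    rw [← hφα, α.apply_symm_apply, α.apply_symm_apply]
  have hcongr : ∀ x : H ⊗[k] H, TensorProduct.congr α α x
      = TensorProduct.map α.toLinearMap α.toLinearMap x := fun x => rfl
  have hΔαinv : ∀ c, Δ (α.symm c)
      = TensorProduct.map α.symm.toLinearMap α.symm.toLinearMap (Δ c) := by
    intro c
    have h1 := hΔα (α.symm c)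
    rw [α.apply_symm_apply] at h1
    apply (TensorProduct.congr α α).injective
    rw [hcongr, hcongr, ← h1]
    have : ∀ x : H ⊗[k] H, TensorProduct.map α.toLinearMap α.toLinearMap
        (TensorProduct.map α.symm.toLinearMap α.symm.toLinearMap x) = x := by
      intro x
      induction x using TensorProduct.induction_on with
      | zero => simp
      | tmul a b => simp
      | add u v hu hv => simp [hu, hv]
    rw [this]
  have hεαinv : ∀ c, ε (α.symm c) = ε c := by
    intro c; have h1 := hεα (α.symm c); rw [α.apply_symm_apply] at h1; exact h1.symm
  refine ⟨?_, ?_, ?_, ?_, ?_⟩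
  · -- Hom-associativity
    have key : ∀ g h k1 h' k1',
        mul (mul (mul h' h) (α.symm (α g))) (φ (α (mul k1 k1')))
        = mul (mul (α h') (α.symm (mul (mul h (α.symm g)) (φ (α k1))))) (φ (α (α k1'))) := by
      intro g h k1 h' k1'
      rw [α.symm_apply_apply, hαinvmul, hαinvmul, ← hφαinv, α.symm_apply_apply]
      simp only [hφα, hφmul, hαmul]
      rw [hassoc h', ← hassoc (mul h' (mul (α.symm h) (α.symm (α.symm g)))),
        hαmul h', hαmul (α.symm h), α.apply_symm_apply, α.apply_symm_apply,
        hassoc h' h, α.apply_symm_apply]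
    intro c b b'
    induction b using TensorProduct.induction_on with
    | zero => simp
    | add u v hu hv => simp only [map_add, LinearMap.add_apply] at hu hv ⊢; rw [hu, hv]
    | tmul h k1 =>
      induction b' using TensorProduct.induction_on with
      | zero => simp
      | add u v hu hv => simp only [map_add, LinearMap.add_apply] at hu hv ⊢; rw [hu, hv]
      | tmul h' k1' =>
        simp only [opTensorMul, TensorProduct.curry_apply, LinearMap.coe_comp,
          Function.comp_apply, LinearEquiv.coe_coe, TensorProduct.tensorTensorTensorComm_tmul,
          TensorProduct.map_tmul, TensorProduct.lift.tmul, LinearMap.flip_apply,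
          TensorProduct.congr_tmul, hact]
        exact key c h k1 h' k1'
  · -- unitality
    intro c
    rw [hact, hαone, hφone, honel, α.apply_symm_apply, honer]
  · -- morphism in Hom-category
    intro c b
    induction b using TensorProduct.induction_on with
    | zero => simp
    | add u v hu hv => simp only [map_add, LinearMap.add_apply] at hu hv ⊢; rw [hu, hv]
    | tmul h k1 =>
      rw [TensorProduct.congr_tmul, hact, hact, hαmul, hαmul]
      simp [hφα]
  · -- comultiplicativity
    have hΔφα : ∀ x, Δ (φ (α x)) = TensorProduct.map
        (φ.toLinearMap ∘ₗ α.toLinearMap) (φ.toLinearMap ∘ₗ α.toLinearMap) (Δ x) := by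
      intro x
      rw [hφΔ, hΔα]
      induction Δ x using TensorProduct.induction_on with
      | zero => simp
      | tmul a b => simp
      | add u v hu hv => simp [hu, hv]
    have key4 : ∀ x y z : H ⊗[k] H,
        TensorProduct.map (TensorProduct.lift mul) (TensorProduct.lift mul)
          (TensorProduct.tensorTensorTensorComm k H H H H
            ((TensorProduct.map (TensorProduct.lift mul) (TensorProduct.lift mul)
              (TensorProduct.tensorTensorTensorComm k H H H H
                (y ⊗ₜ TensorProduct.map α.symm.toLinearMap α.symm.toLinearMap x)))
             ⊗ₜ TensorProduct.map (φ.toLinearMap ∘ₗ α.toLinearMap)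
                  (φ.toLinearMap ∘ₗ α.toLinearMap) z))
        = TensorProduct.map (TensorProduct.lift (opTensorAct α mul φ))
            (TensorProduct.lift (opTensorAct α mul φ))
            (TensorProduct.tensorTensorTensorComm k H H (H ⊗[k] H) (H ⊗[k] H)
              (x ⊗ₜ TensorProduct.tensorTensorTensorComm k H H H H (y ⊗ₜ z))) := by
      intro x y z
      induction x using TensorProduct.induction_on with
      | zero => simp
      | add u v hu hv => simp only [map_add, tmul_add, add_tmul] at hu hv ⊢; rw [hu, hv]
      | tmul g1 g2 =>
        induction y using TensorProduct.induction_on with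
        | zero => simp
        | add u v hu hv => simp only [map_add, tmul_add, add_tmul] at hu hv ⊢; rw [hu, hv]
        | tmul h1 h2 =>
          induction z using TensorProduct.induction_on with
          | zero => simp
          | add u v hu hv => simp only [map_add, tmul_add, add_tmul] at hu hv ⊢; rw [hu, hv]
          | tmul k1 k2 =>
            simp [hact]
    intro c b
    induction b using TensorProduct.induction_on with
    | zero => simp
    | add u v hu hv => simp only [map_add, tmul_add, LinearMap.add_apply] at hu hv ⊢; rw [hu, hv]
    | tmul h k1 =>
      rw [hact, hΔmul, hΔmul, hΔαinv, hΔφα]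
      have hcom : opTensorComul Δ (h ⊗ₜ[k] k1)
          = TensorProduct.tensorTensorTensorComm k H H H H (Δ h ⊗ₜ Δ k1) := by
        simp [opTensorComul]
      rw [hcom]
      exact key4 (Δ c) (Δ h) (Δ k1)
  · -- counitality
    intro c b
    induction b using TensorProduct.induction_on with
    | zero => simp
    | add u v hu hv => simp only [map_add, LinearMap.add_apply] at hu hv ⊢; rw [hu, hv]; ring
    | tmul h k1 =>
      rw [hact, hεmul, hεmul, hεαinv, hφε, hεα]
      simp [opTensorCounit]
      ring


end HomPaper
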